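/- Let c > 0. For a > 0 define v_a : (0,∞) → ℝ by v_a(r) := F(r/a) · c/r (the singular part V_sin of the Coulomb potential at cutoff scale a = t^β). Then there exist constants C̃₁, C̃₂ > 0, independent of a, c, and r, such that for all a > 0 and all r > 0: r² · |v_a'(r)| ≤ c · C̃₁ · 𝟙{r ≤ a} and r³ · |v_a''(r)| ≤ c · C̃₂ · 𝟙{r ≤ a}. -/

import Mathlib

open MeasureTheory

/-- The bump profile `exp(−1/((r−1/2)(1−r)))`. -/
noncomputable def bumpProfile (r : ℝ) : ℝ :=
  Real.exp (-(1 / ((r - 1 / 2) * (1 - r))))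

/-- The normalization constant `C₀ = (∫_{1/2}^1 exp(−1/((r−1/2)(1−r))) dr)⁻¹. -/
noncomputable def C₀ : ℝ := (∫ r in (1 / 2 : ℝ)..1, bumpProfile r)⁻¹

/-- The smooth cutoff `F`. -/
noncomputable def Fcut (l : ℝ) : ℝ :=
  if l ≤ 1 / 2 then 1
  else if l < 1 then C₀ * ∫ r in l..(1 : ℝ), bumpProfile r
  else 0

/-!
Writing `v_a(r) = (c/a) · w(r/a)` with `w(x) = F(x)/x` reduces everything to `a = c = 1`, since
`r² v_a'(r) = c x² w'(x)` and `r³ v_a''(r) = c x³ w''(x)` for `x = r/a`. On each of the three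
regions `x ≤ 1/2`, `1/2 < x < 1`, `1 ≤ x` the cutoff is `1`, `C₀ ∫_x^1 bump` or `0`, and with
`w = φ/x` one has `x² w' = xφ' - φ` and `x³ w'' = x²φ'' - 2xφ' + 2φ`, which are bounded because
`0 < bump ≤ 1` and `|bump'| ≤ 1`. At the junctions `x = 1/2` and `x = 1` it suffices to know `w`
on one side: there `deriv` is either the one-sided derivative or the junk value `0`.
-/

open Filter Topology Set

theorem abs_deriv_le_of_eventuallyEq_nhdsWithin {h k : ℝ → ℝ} {s : Set ℝ} {x k' : ℝ}
    (hs : UniqueDiffWithinAt ℝ s x) (hk : HasDerivAt k k' x) (hhk : h =ᶠ[𝓝[s] x] k) :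
    |deriv h x| ≤ |k'| := by
  by_cases hd : DifferentiableAt ℝ h x
  · have : NeBot (𝓝[s] x) := mem_closure_iff_nhdsWithin_neBot.mp hs.mem_closure
    have hx : h x = k x := tendsto_nhds_unique
      ((hd.continuousAt.continuousWithinAt (s := s)).tendsto.congr' hhk)
      hk.continuousAt.continuousWithinAt.tendsto
    rw [hs.eq_deriv s hd.hasDerivAt.hasDerivWithinAt
      (hk.hasDerivWithinAt.congr_of_eventuallyEq hhk hx)]
  · rw [deriv_zero_of_not_differentiableAt hd, abs_zero]
    exact abs_nonneg _

theorem abs_deriv_le_and_abs_deriv_deriv_le {w g g' : ℝ → ℝ} {s : Set ℝ} {x g'' : ℝ}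
    (hs_open : IsOpen s) (hs : UniqueDiffWithinAt ℝ s x)
    (hg : ∀ᶠ y in 𝓝 x, HasDerivAt g (g' y) y) (hg' : HasDerivAt g' g'' x)
    (hwg : w =ᶠ[𝓝[s] x] g) :
    |deriv w x| ≤ |g' x| ∧ |deriv (deriv w) x| ≤ |g''| := by
  refine ⟨abs_deriv_le_of_eventuallyEq_nhdsWithin hs hg.self_of_nhds hwg,
    abs_deriv_le_of_eventuallyEq_nhdsWithin hs hg' ?_⟩
  have hnear : ∀ᶠ y in 𝓝[s] x, w =ᶠ[𝓝 y] g := by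
    filter_upwards [eventually_eventually_nhdsWithin.mpr hwg, self_mem_nhdsWithin]
      with y hy hys
    rwa [hs_open.nhdsWithin_eq hys] at hy
  filter_upwards [hnear, nhdsWithin_le_nhds hg] with y hy hgy
  rw [hy.deriv_eq, hgy.deriv]

theorem deriv_bounds_of_eventuallyEq_div_id {w φ φ' : ℝ → ℝ} {s : Set ℝ} {x φ'' : ℝ}
    (hx : 0 < x) (hs_open : IsOpen s) (hs : UniqueDiffWithinAt ℝ s x)
    (hφ : ∀ᶠ y in 𝓝 x, HasDerivAt φ (φ' y) y) (hφ' : HasDerivAt φ' φ'' x)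
    (hw : w =ᶠ[𝓝[s] x] fun y => φ y / y) :
    x ^ 2 * |deriv w x| ≤ |x * φ' x - φ x| ∧
      x ^ 3 * |deriv (deriv w) x| ≤ |x ^ 2 * φ'' - 2 * x * φ' x + 2 * φ x| := by
  have hquot : ∀ᶠ y in 𝓝 x,
      HasDerivAt (fun y => φ y / y) ((φ' y * y - φ y) / y ^ 2) y := by
    filter_upwards [hφ, lt_mem_nhds hx] with y hφy hy
    exact (hφy.fun_div (hasDerivAt_id' y) hy.ne').congr_deriv (by ring)
  have hquot' : HasDerivAt (fun y => (φ' y * y - φ y) / y ^ 2)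
      ((x ^ 2 * φ'' - 2 * x * φ' x + 2 * φ x) / x ^ 3) x := by
    refine (((hφ'.fun_mul (hasDerivAt_id' x)).fun_sub hφ.self_of_nhds).fun_div
      (hasDerivAt_pow 2 x) (by positivity)).congr_deriv ?_
    field_simp
    ring
  obtain ⟨h1, h2⟩ := abs_deriv_le_and_abs_deriv_deriv_le hs_open hs hquot hquot' hw
  constructor
  · calc x ^ 2 * |deriv w x| ≤ x ^ 2 * |(φ' x * x - φ x) / x ^ 2| := by gcongr
      _ = |x * φ' x - φ x| := by
        rw [abs_div, abs_of_pos (by positivity : (0 : ℝ) < x ^ 2)]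
        field_simp
  · calc x ^ 3 * |deriv (deriv w) x|
        ≤ x ^ 3 * |(x ^ 2 * φ'' - 2 * x * φ' x + 2 * φ x) / x ^ 3| := by gcongr
      _ = |x ^ 2 * φ'' - 2 * x * φ' x + 2 * φ x| := by
        rw [abs_div, abs_of_pos (by positivity : (0 : ℝ) < x ^ 3)]
        field_simp

theorem bumpProfile_pos (x : ℝ) : 0 < bumpProfile x := Real.exp_pos _

theorem bumpProfile_le_one {x : ℝ} (hx : x ∈ Icc (1 / 2 : ℝ) 1) : bumpProfile x ≤ 1 := by
  have : 0 ≤ (x - 1 / 2) * (1 - x) := mul_nonneg (by linarith [hx.1]) (by linarith [hx.2])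
  exact Real.exp_le_one_iff.mpr (neg_nonpos.mpr (by positivity))

theorem measurable_bumpProfile : Measurable bumpProfile := by
  unfold bumpProfile
  fun_prop

theorem intervalIntegrable_bumpProfile {x : ℝ} (hx : x ∈ Icc (1 / 2 : ℝ) 1) :
    IntervalIntegrable bumpProfile volume x 1 := by
  rw [intervalIntegrable_iff_integrableOn_Ioc_of_le hx.2]
  refine Measure.integrableOn_of_bounded (M := 1) measure_Ioc_lt_top.ne
    measurable_bumpProfile.aestronglyMeasurable ?_
  filter_upwards [ae_restrict_mem measurableSet_Ioc] with t ht
  rw [Real.norm_eq_abs, abs_of_pos (bumpProfile_pos t)]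
  exact bumpProfile_le_one ⟨hx.1.trans ht.1.le, ht.2⟩

theorem exists_hasDerivAt_bumpProfile_abs_le_one {x : ℝ} (hx : x ∈ Ioo (1 / 2 : ℝ) 1) :
    ∃ b', HasDerivAt bumpProfile b' x ∧ |b'| ≤ 1 := by
  set u := (x - 1 / 2) * (1 - x) with hu_def
  have hu : 0 < u := mul_pos (by linarith [hx.1]) (by linarith [hx.2])
  have hderiv : HasDerivAt bumpProfile (bumpProfile x * ((3 / 2 - 2 * x) / u ^ 2)) x := by
    have hpoly : HasDerivAt (fun r : ℝ => (r - 1 / 2) * (1 - r)) (3 / 2 - 2 * x) x :=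
      (((hasDerivAt_id' x).sub_const _).fun_mul ((hasDerivAt_id' x).const_sub 1)).congr_deriv
        (by ring)
    refine ((((hasDerivAt_const x (1 : ℝ)).fun_div hpoly hu.ne').fun_neg).exp).congr_deriv ?_
    simp only [bumpProfile, ← hu_def]
    ring
  refine ⟨_, hderiv, ?_⟩
  -- `exp (-1/u) ≤ 2 u²` absorbs the `1/u²` singularity of the chain-rule factor.
  have hexp : bumpProfile x ≤ 2 * u ^ 2 := by
    have h := Real.pow_div_factorial_le_exp (1 / u) (by positivity) 2
    rw [bumpProfile, Real.exp_neg, inv_le_comm₀ (Real.exp_pos _) (by positivity)]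
    refine le_trans (le_of_eq ?_) h
    rw [Nat.factorial_two]
    field_simp
    norm_num
  have hlin : |3 / 2 - 2 * x| ≤ 1 / 2 := abs_le.mpr ⟨by linarith [hx.2], by linarith [hx.1]⟩
  calc |bumpProfile x * ((3 / 2 - 2 * x) / u ^ 2)|
      = bumpProfile x * (|3 / 2 - 2 * x| / u ^ 2) := by
        rw [abs_mul, abs_div, abs_of_pos (bumpProfile_pos x),
          abs_of_pos (by positivity : (0 : ℝ) < u ^ 2)]
    _ ≤ 2 * u ^ 2 * (1 / 2 / u ^ 2) := by gcongr
    _ = 1 := by field_simp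

noncomputable def bumpTail (x : ℝ) : ℝ := ∫ t in x..1, bumpProfile t

theorem hasDerivAt_bumpTail {x : ℝ} (hx : x ∈ Ioo (1 / 2 : ℝ) 1) :
    HasDerivAt bumpTail (-bumpProfile x) x := by
  obtain ⟨b', hb', -⟩ := exists_hasDerivAt_bumpProfile_abs_le_one hx
  exact intervalIntegral.integral_hasDerivAt_left
    (intervalIntegrable_bumpProfile ⟨hx.1.le, hx.2.le⟩)
    measurable_bumpProfile.aestronglyMeasurable.stronglyMeasurableAtFilter hb'.continuousAt

theorem abs_bumpTail_le_one {x : ℝ} (hx : x ∈ Icc (1 / 2 : ℝ) 1) : |bumpTail x| ≤ 1 := by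
  have h := intervalIntegral.norm_integral_le_of_norm_le_const (C := 1) (f := bumpProfile)
    (a := x) (b := 1) fun t ht => by
      rw [uIoc_of_le hx.2] at ht
      rw [Real.norm_eq_abs, abs_of_pos (bumpProfile_pos t)]
      exact bumpProfile_le_one ⟨hx.1.trans ht.1.le, ht.2⟩
  calc |bumpTail x| ≤ 1 * |1 - x| := h
    _ ≤ 1 := by
      rw [one_mul, abs_of_nonneg (by linarith [hx.2])]
      linarith [hx.1]

theorem Fcut_of_le_half {x : ℝ} (hx : x ≤ 1 / 2) : Fcut x = 1 := if_pos hx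

theorem Fcut_of_mem_Ioo {x : ℝ} (hx : x ∈ Ioo (1 / 2 : ℝ) 1) : Fcut x = C₀ * bumpTail x := by
  rw [Fcut, if_neg (not_le.mpr hx.1), if_pos hx.2, bumpTail]

theorem Fcut_of_one_le {x : ℝ} (hx : 1 ≤ x) : Fcut x = 0 := by
  rw [Fcut, if_neg (by linarith), if_neg (not_lt.mpr hx)]

noncomputable def singularCoulombProfile (x : ℝ) : ℝ := Fcut x / x

theorem singularCoulombProfile_deriv_bounds_of_le_half {x : ℝ} (hx : 0 < x) (hx2 : x ≤ 1 / 2) :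
    x ^ 2 * |deriv singularCoulombProfile x| ≤ 1 ∧
      x ^ 3 * |deriv (deriv singularCoulombProfile) x| ≤ 2 := by
  have h := deriv_bounds_of_eventuallyEq_div_id (w := singularCoulombProfile) (φ := fun _ => 1) (φ' := fun _ => 0) hx
    isOpen_Iio (uniqueDiffWithinAt_Iio x) (.of_forall fun y => hasDerivAt_const y 1)
    (hasDerivAt_const x 0) (eventually_nhdsWithin_of_forall fun y hy => by
      rw [singularCoulombProfile, Fcut_of_le_half ((le_of_lt hy).trans hx2)])
  norm_num at h
  exact h

theorem singularCoulombProfile_deriv_bounds_of_mem_Ioo {x : ℝ} (hx : x ∈ Ioo (1 / 2 : ℝ) 1) :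
    x ^ 2 * |deriv singularCoulombProfile x| ≤ 2 * |C₀| ∧
      x ^ 3 * |deriv (deriv singularCoulombProfile) x| ≤ 5 * |C₀| := by
  obtain ⟨b', hb', hb'_le⟩ := exists_hasDerivAt_bumpProfile_abs_le_one hx
  have hφ : ∀ᶠ y in 𝓝 x, HasDerivAt (fun y => C₀ * bumpTail y) (C₀ * -bumpProfile y) y := by
    filter_upwards [Ioo_mem_nhds hx.1 hx.2] with y hy
    exact (hasDerivAt_bumpTail hy).const_mul C₀
  have hw : singularCoulombProfile =ᶠ[𝓝 x] fun y => C₀ * bumpTail y / y := by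
    filter_upwards [Ioo_mem_nhds hx.1 hx.2] with y hy
    rw [singularCoulombProfile, Fcut_of_mem_Ioo hy]
  obtain ⟨h1, h2⟩ := deriv_bounds_of_eventuallyEq_div_id (by linarith [hx.1]) isOpen_Iio
    (uniqueDiffWithinAt_Iio x) hφ (hb'.neg.const_mul C₀) (nhdsWithin_le_nhds hw)
  have hb := bumpProfile_pos x
  have hb1 := bumpProfile_le_one ⟨hx.1.le, hx.2.le⟩
  obtain ⟨hG, hG'⟩ := abs_le.mp (abs_bumpTail_le_one ⟨hx.1.le, hx.2.le⟩)
  obtain ⟨hb'₁, hb'₂⟩ := abs_le.mp hb'_le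
  have hx0 : 0 < x := by linarith [hx.1]
  have hx1 := hx.2
  constructor
  · refine h1.trans ?_
    rw [show x * (C₀ * -bumpProfile x) - C₀ * bumpTail x
      = C₀ * -(x * bumpProfile x + bumpTail x) by ring, abs_mul, abs_neg, mul_comm 2]
    gcongr
    exact abs_le.mpr ⟨by nlinarith, by nlinarith⟩
  · refine h2.trans ?_
    rw [show x ^ 2 * (C₀ * -b') - 2 * x * (C₀ * -bumpProfile x) + 2 * (C₀ * bumpTail x)
      = C₀ * (-(x ^ 2 * b') + 2 * x * bumpProfile x + 2 * bumpTail x) by ring, abs_mul,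
      mul_comm 5]
    gcongr
    have hx2 : x ^ 2 < 1 := by nlinarith
    exact abs_le.mpr ⟨by nlinarith, by nlinarith⟩

theorem singularCoulombProfile_deriv_bounds_of_one_le {x : ℝ} (hx : 1 ≤ x) :
    x ^ 2 * |deriv singularCoulombProfile x| ≤ 0 ∧
      x ^ 3 * |deriv (deriv singularCoulombProfile) x| ≤ 0 := by
  have h := deriv_bounds_of_eventuallyEq_div_id (w := singularCoulombProfile) (φ := fun _ => 0) (φ' := fun _ => 0)
    (by linarith) isOpen_Ioi (uniqueDiffWithinAt_Ioi x) (.of_forall fun y => hasDerivAt_const y 0)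
    (hasDerivAt_const x 0) (eventually_nhdsWithin_of_forall fun y hy => by
      rw [singularCoulombProfile, Fcut_of_one_le (hx.trans (le_of_lt hy))])
  norm_num at h
  exact h

theorem singularCoulombProfile_deriv_bounds {x : ℝ} (hx : 0 < x) :
    x ^ 2 * |deriv singularCoulombProfile x| ≤ (1 + 2 * |C₀|) * (if x ≤ 1 then 1 else 0) ∧
      x ^ 3 * |deriv (deriv singularCoulombProfile) x|
        ≤ (2 + 5 * |C₀|) * (if x ≤ 1 then 1 else 0) := by
  have hC₀ := abs_nonneg C₀
  rcases le_or_gt x (1 / 2) with hx2 | hx2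
  · obtain ⟨h1, h2⟩ := singularCoulombProfile_deriv_bounds_of_le_half hx hx2
    rw [if_pos (by linarith)]
    constructor <;> linarith
  rcases lt_or_ge x 1 with hx1 | hx1
  · obtain ⟨h1, h2⟩ := singularCoulombProfile_deriv_bounds_of_mem_Ioo ⟨hx2, hx1⟩
    rw [if_pos hx1.le]
    constructor <;> linarith
  · obtain ⟨h1, h2⟩ := singularCoulombProfile_deriv_bounds_of_one_le hx1
    constructor <;> split_ifs <;> linarith

theorem deriv_const_mul_comp_div (w : ℝ → ℝ) (k a : ℝ) :
    deriv (fun q => k * w (q / a)) = fun r => k / a * deriv w (r / a) := by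
  funext r
  simp_rw [div_eq_inv_mul _ a]
  rw [deriv_const_mul_field, deriv_comp_mul_left, smul_eq_mul]
  ring

/-- Bounds on the singular part `v_a(r) = F(r/a)·c/r` of the Coulomb potential:
there exist constants `C̃₁, C̃₂ > 0`, independent of `a`, `c`, `r`, such that for all
`c > 0`, `a > 0`, `r > 0`: `r²|v_a'(r)| ≤ c·C̃₁·𝟙{r ≤ a}` and
`r³|v_a''(r)| ≤ c·C̃₂·𝟙{r ≤ a}`. -/
theorem singular_coulomb_derivative_bounds :
    ∃ C1 C2 : ℝ, 0 < C1 ∧ 0 < C2 ∧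
      ∀ c > (0 : ℝ), ∀ a > (0 : ℝ), ∀ r > (0 : ℝ),
        r ^ 2 * |deriv (fun q => Fcut (q / a) * (c / q)) r|
            ≤ c * C1 * (if r ≤ a then 1 else 0) ∧
          r ^ 3 * |deriv (deriv (fun q => Fcut (q / a) * (c / q))) r|
            ≤ c * C2 * (if r ≤ a then 1 else 0) := by
  refine ⟨1 + 2 * |C₀|, 2 + 5 * |C₀|, by positivity, by positivity, ?_⟩
  intro c hc a ha r hr
  have hscale : (fun q => Fcut (q / a) * (c / q))
      = fun q => c / a * singularCoulombProfile (q / a) := by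
    funext q
    rw [singularCoulombProfile, div_div_eq_mul_div]
    field_simp
  obtain ⟨h1, h2⟩ := singularCoulombProfile_deriv_bounds (div_pos hr ha)
  simp only [div_le_one ha] at h1 h2
  simp only [hscale, deriv_const_mul_comp_div]
  constructor
  · calc r ^ 2 * |c / a / a * deriv singularCoulombProfile (r / a)|
        = c * ((r / a) ^ 2 * |deriv singularCoulombProfile (r / a)|) := by
          rw [abs_mul, abs_of_pos (by positivity)]
          field_simp
      _ ≤ _ := by rw [mul_assoc]; gcongr
  · calc r ^ 3 * |c / a / a / a * deriv (deriv singularCoulombProfile) (r / a)|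
        = c * ((r / a) ^ 3 * |deriv (deriv singularCoulombProfile) (r / a)|) := by
          rw [abs_mul, abs_of_pos (by positivity)]
          field_simp
      _ ≤ _ := by rw [mul_assoc]; gcongr
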